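/- An E-linear code C of length 2n satisfies |C| · |C^{⊥_{S_L}}| = 4^{2n} · 2^{k₂} where k₂ = dim(C_Tor) − dim(C_Res); consequently, C is left symplectic nice (|C|·|C^{⊥_{S_L}}| = |E|^{2n}) if and only if C is free, and in that case C^{⊥_{S_L}} = C^{⊥_S}. -/

import Mathlib

open Finset

/-- The non-unital ring `E`, realized as pairs `(u, v) ∈ F₂ × F₂`
representing `uκ + vζ`. -/
def Ering : Type := (ZMod 2) × (ZMod 2)

namespace Ering

instance : AddCommGroup Ering := inferInstanceAs (AddCommGroup ((ZMod 2) × (ZMod 2)))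
instance : DecidableEq Ering := inferInstanceAs (DecidableEq ((ZMod 2) × (ZMod 2)))
instance : Fintype Ering := inferInstanceAs (Fintype ((ZMod 2) × (ZMod 2)))

instance : Mul Ering := ⟨fun a b => (a.1 * b.1, a.2 * b.1)⟩

instance : NonUnitalRing Ering :=
  { (inferInstance : AddCommGroup Ering), (inferInstance : Mul Ering) with
    left_distrib := by decide
    right_distrib := by decide
    zero_mul := by decide
    mul_zero := by decide
    mul_assoc := by decide }

/-- The generator κ. -/
def kappa : Ering := ((1 : ZMod 2), (0 : ZMod 2))
/-- The generator τ. -/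
def tau : Ering := ((1 : ZMod 2), (1 : ZMod 2))
/-- ζ = κ + τ. -/
def zeta : Ering := ((0 : ZMod 2), (1 : ZMod 2))

/-- The scalar action of `F₂` on `E`: `u • e = e` if `u = 1`, else `0`. -/
def fsmul (u : ZMod 2) (e : Ering) : Ering := if u = 1 then e else 0

/-- `E`-vectors of length `2n`, written as a pair `(u | v)` of halves of length `n`. -/
abbrev VE (n : ℕ) := (Fin n → Ering) × (Fin n → Ering)

/-- `F₂`-vectors of length `2n`, written as a pair of halves of length `n`. -/
abbrev VF (n : ℕ) := (Fin n → ZMod 2) × (Fin n → ZMod 2)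

/-- Symplectic inner product on `E^{2n}`: `⟨(u|v),(u'|v')⟩ₛ = ⟨u,v'⟩ + ⟨v,u'⟩`. -/
def sympE {n : ℕ} (x y : VE n) : Ering := ∑ i, x.1 i * y.2 i + ∑ i, x.2 i * y.1 i

/-- Symplectic inner product on `F₂^{2n}`. -/
def sympF {n : ℕ} (x y : VF n) : ZMod 2 := ∑ i, x.1 i * y.2 i + ∑ i, x.2 i * y.1 i

/-- An `E`-linear code: a left `E`-submodule of `E^{2n}`. -/
def IsLinearCode {n : ℕ} (C : Set (VE n)) : Prop :=
  (0 : VE n) ∈ C ∧ (∀ x ∈ C, ∀ y ∈ C, x + y ∈ C) ∧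
    (∀ e : Ering, ∀ x ∈ C, ((fun i => e * x.1 i, fun i => e * x.2 i) : VE n) ∈ C)

/-- Componentwise reduction `π : E^{2n} → F₂^{2n}`, `π(uκ + vζ) = u`. -/
def resVec {n : ℕ} (x : VE n) : VF n := (fun i => (x.1 i).1, fun i => (x.2 i).1)

/-- For `e ∈ E` and `v ∈ F₂^{2n}`, the vector `ev ∈ E^{2n}` with entries `vᵢ • e`. -/
def evec {n : ℕ} (e : Ering) (v : VF n) : VE n :=
  (fun i => fsmul (v.1 i) e, fun i => fsmul (v.2 i) e)

/-- The residue code `C_Res = π(C)`. -/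
def resCode {n : ℕ} (C : Set (VE n)) : Set (VF n) := resVec '' C

/-- The torsion code `C_Tor = {v : ζv ∈ C}`. -/
def torCode {n : ℕ} (C : Set (VE n)) : Set (VF n) := {v | evec zeta v ∈ C}

/-- The left symplectic dual. -/
def leftDual {n : ℕ} (C : Set (VE n)) : Set (VE n) := {z | ∀ w ∈ C, sympE z w = 0}

/-- The right symplectic dual. -/
def rightDual {n : ℕ} (C : Set (VE n)) : Set (VE n) := {z | ∀ w ∈ C, sympE w z = 0}

/-- The two-sided symplectic dual. -/
def dual {n : ℕ} (C : Set (VE n)) : Set (VE n) := leftDual C ∩ rightDual C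

/-- The binary symplectic dual of `D ⊆ F₂^{2n}`. -/
def dualF {n : ℕ} (D : Set (VF n)) : Set (VF n) := {z | ∀ w ∈ D, sympF z w = 0}

/-- The two-sided symplectic hull. -/
def SHull {n : ℕ} (C : Set (VE n)) : Set (VE n) := C ∩ dual C

/-- The left symplectic hull. -/
def LSHull {n : ℕ} (C : Set (VE n)) : Set (VE n) := C ∩ leftDual C

/-- The right symplectic hull. -/
def RSHull {n : ℕ} (C : Set (VE n)) : Set (VE n) := C ∩ rightDual C

/-- Symplectic hull of a binary code. -/
def SHullF {n : ℕ} (D : Set (VF n)) : Set (VF n) := D ∩ dualF D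

/-- A free `E`-linear code: residue and torsion codes coincide. -/
def IsFree {n : ℕ} (C : Set (VE n)) : Prop := resCode C = torCode C

end Ering

/-! Write `x ∈ E^{2n}` as `π(x)κ + σ(x)ζ` with `π(x) = resVec x` and `σ(x) = zetaVec x` in
`F₂^{2n}`. Since `yζ = 0` for every `y`, `⟨z, w⟩ₛ = ⟨π z, π w⟩ κ + ⟨σ z, π w⟩ ζ`, so `z` is in the
left dual iff `π z` and `σ z` both lie in `C_Res^⊥`; hence
`|C^{⊥_{S_L}}| = |C_Res^⊥|² = (4ⁿ / |C_Res|)²`. The kernel of `π` on `C` is `ζ C_Tor`, so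
`|C| = |C_Res|·|C_Tor|`, and altogether `|C|·|C^{⊥_{S_L}}| = 4^{2n}·|C_Tor| / |C_Res|`.
As `C_Res ⊆ C_Tor`, this equals `4^{2n}` exactly when `C` is free; the right dual is cut out by
`π z ∈ C_Tor^⊥`, so for free `C` it contains the left dual. -/

namespace Ering

variable {n : ℕ}

def zetaVec (x : VE n) : VF n := (fun i => (x.1 i).2, fun i => (x.2 i).2)

def fstHom : Ering →+ ZMod 2 := AddMonoidHom.fst _ _

def sndHom : Ering →+ ZMod 2 := AddMonoidHom.snd _ _

lemma sympE_eq (z w : VE n) :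
    sympE z w = ((sympF (resVec z) (resVec w), sympF (zetaVec z) (resVec w)) : Ering) :=
  Prod.ext (show fstHom (_ + _) = _ by rw [map_add, map_sum, map_sum]; rfl)
    (show sndHom (_ + _) = _ by rw [map_add, map_sum, map_sum]; rfl)

lemma sympE_eq_zero_iff (z w : VE n) :
    sympE z w = 0 ↔ sympF (resVec z) (resVec w) = 0 ∧ sympF (zetaVec z) (resVec w) = 0 := by
  rw [sympE_eq]; exact Prod.ext_iff

lemma sympF_comm (x y : VF n) : sympF x y = sympF y x := by
  simp only [sympF, mul_comm (x.1 _), mul_comm (x.2 _), add_comm]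

def sympForm (n : ℕ) : LinearMap.BilinForm (ZMod 2) (VF n) :=
  LinearMap.mk₂ (ZMod 2) sympF
    (fun a b w => by
      simp only [sympF, Prod.fst_add, Prod.snd_add, Pi.add_apply, add_mul, Finset.sum_add_distrib]
      ring)
    (fun c a w => by
      simp only [sympF, Prod.smul_fst, Prod.smul_snd, Pi.smul_apply, smul_eq_mul, mul_assoc,
        ← Finset.mul_sum, mul_add])
    (fun w a b => by
      simp only [sympF, Prod.fst_add, Prod.snd_add, Pi.add_apply, mul_add, Finset.sum_add_distrib]
      ring)
    (fun c w a => by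
      simp only [sympF, Prod.smul_fst, Prod.smul_snd, Pi.smul_apply, smul_eq_mul,
        mul_left_comm _ c, ← Finset.mul_sum, mul_add])

lemma sympForm_apply (x y : VF n) : sympForm n x y = sympF x y := rfl

lemma sympForm_isRefl : (sympForm n).IsRefl := fun x y h => by
  rwa [sympForm_apply, sympF_comm] at h

lemma sympForm_nondegenerate : (sympForm n).Nondegenerate := by
  refine (sympForm_isRefl.nondegenerate_iff_separatingLeft).2 fun x hx => ?_
  refine Prod.ext (funext fun i => ?_) (funext fun i => ?_)
  · simpa [sympForm_apply, sympF, Pi.single_apply] using hx (0, Pi.single i 1)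
  · simpa [sympForm_apply, sympF, Pi.single_apply] using hx (Pi.single i 1, 0)

lemma card_dualF_mul_card (W : Submodule (ZMod 2) (VF n)) :
    Nat.card (dualF (W : Set (VF n))) * Nat.card W = 4 ^ n := by
  have hdual : dualF (W : Set (VF n)) = (sympForm n).orthogonal W := by
    ext z
    simp only [dualF, Set.mem_ofPred_eq, SetLike.mem_coe, LinearMap.BilinForm.mem_orthogonal_iff,
      sympForm_apply, sympF_comm z]
  have hcard (U : Submodule (ZMod 2) (VF n)) : Nat.card U = 2 ^ Module.finrank (ZMod 2) U := by
    have := Fintype.ofFinite U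
    rw [Nat.card_eq_fintype_card, Module.card_eq_pow_finrank (K := ZMod 2), ZMod.card]
  have hV : Module.finrank (ZMod 2) (VF n) = 2 * n := by
    rw [Module.finrank_prod, Module.finrank_pi, Fintype.card_fin, two_mul]
  have hle : Module.finrank (ZMod 2) W ≤ 2 * n := hV ▸ Submodule.finrank_le W
  rw [hdual, SetLike.coe_sort_coe, hcard, hcard,
    LinearMap.BilinForm.finrank_orthogonal sympForm_nondegenerate, hV, ← pow_add,
    Nat.sub_add_cancel hle, pow_mul]
  norm_num

protected lemma neg_eq_self : ∀ e : Ering, -e = e := by decide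
lemma fsmul_fst_zeta : ∀ e : Ering, fsmul e.1 zeta = zeta * e := by decide
lemma fsmul_snd_zeta : ∀ e : Ering, fsmul e.2 zeta = e + kappa * e := by decide
lemma fsmul_snd_zeta_of_fst_eq_zero : ∀ e : Ering, e.1 = 0 → fsmul e.2 zeta = e := by decide
lemma fst_fsmul_zeta : ∀ a : ZMod 2, (fsmul a zeta).1 = 0 := by decide
lemma snd_fsmul_zeta : ∀ a : ZMod 2, (fsmul a zeta).2 = a := by decide

lemma resVec_evec_zeta (v : VF n) : resVec (evec zeta v) = 0 :=
  Prod.ext (funext fun _ => fst_fsmul_zeta _) (funext fun _ => fst_fsmul_zeta _)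

lemma zetaVec_evec_zeta (v : VF n) : zetaVec (evec zeta v) = v :=
  Prod.ext (funext fun _ => snd_fsmul_zeta _) (funext fun _ => snd_fsmul_zeta _)

lemma evec_zeta_resVec (w : VE n) :
    evec zeta (resVec w) = ((fun i => zeta * w.1 i, fun i => zeta * w.2 i) : VE n) :=
  Prod.ext (funext fun _ => fsmul_fst_zeta _) (funext fun _ => fsmul_fst_zeta _)

lemma evec_zeta_zetaVec (w : VE n) :
    evec zeta (zetaVec w) = w + ((fun i => kappa * w.1 i, fun i => kappa * w.2 i) : VE n) :=
  Prod.ext (funext fun _ => fsmul_snd_zeta _) (funext fun _ => fsmul_snd_zeta _)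

lemma evec_zeta_zetaVec_of_resVec_eq_zero {w : VE n} (hw : resVec w = 0) :
    evec zeta (zetaVec w) = w :=
  Prod.ext (funext fun i => fsmul_snd_zeta_of_fst_eq_zero _ (congrFun (congrArg Prod.fst hw) i))
    (funext fun i => fsmul_snd_zeta_of_fst_eq_zero _ (congrFun (congrArg Prod.snd hw) i))

def resHom : VE n →+ VF n where
  toFun := resVec
  map_zero' := rfl
  map_add' _ _ := rfl

variable {C : Set (VE n)}

def IsLinearCode.toAddSubgroup (hC : IsLinearCode C) : AddSubgroup (VE n) where
  carrier := C
  zero_mem' := hC.1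
  add_mem' ha hb := hC.2.1 _ ha _ hb
  neg_mem' {x} hx := by
    rwa [show -x = x from
      Prod.ext (funext fun _ => Ering.neg_eq_self _) (funext fun _ => Ering.neg_eq_self _)]

lemma resCode_subset_torCode (hC : IsLinearCode C) : resCode C ⊆ torCode C := by
  rintro _ ⟨w, hw, rfl⟩
  show evec zeta (resVec w) ∈ C
  rw [evec_zeta_resVec]
  exact hC.2.2 zeta w hw

lemma zetaVec_mem_torCode (hC : IsLinearCode C) {w : VE n} (hw : w ∈ C) :
    zetaVec w ∈ torCode C := by
  show evec zeta (zetaVec w) ∈ C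
  rw [evec_zeta_zetaVec]
  exact hC.2.1 w hw _ (hC.2.2 kappa w hw)

lemma card_eq_card_resCode_mul_card_torCode (hC : IsLinearCode C) :
    Nat.card C = Nat.card (resCode C) * Nat.card (torCode C) := by
  let f := resHom.domRestrict hC.toAddSubgroup
  have hrange : Nat.card f.range = Nat.card (resCode C) := by
    rw [AddMonoidHom.domRestrict_range]
    exact Nat.card_congr (Equiv.setCongr (AddSubgroup.coe_map _ _))
  have hker : f.ker ≃ torCode C :=
    { toFun x := ⟨zetaVec x.1.1, zetaVec_mem_torCode hC x.1.2⟩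
      invFun v := ⟨⟨evec zeta v.1, v.2⟩, resVec_evec_zeta v.1⟩
      left_inv x := Subtype.ext (Subtype.ext (evec_zeta_zetaVec_of_resVec_eq_zero x.2))
      right_inv v := Subtype.ext (zetaVec_evec_zeta v.1) }
  rw [← hrange, ← Nat.card_congr hker, mul_comm, ← AddSubgroup.index_ker,
    AddSubgroup.card_mul_index]
  rfl

lemma mem_leftDual_iff {z : VE n} :
    z ∈ leftDual C ↔ resVec z ∈ dualF (resCode C) ∧ zetaVec z ∈ dualF (resCode C) := by
  simp only [leftDual, dualF, resCode, Set.mem_ofPred_eq, Set.forall_mem_image, sympE_eq_zero_iff,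
    forall_and]

lemma mem_rightDual_iff (hC : IsLinearCode C) {z : VE n} :
    z ∈ rightDual C ↔ resVec z ∈ dualF (torCode C) := by
  refine ⟨fun hz v hv => ?_, fun hz w hw => (sympE_eq_zero_iff w z).2 ⟨?_, ?_⟩⟩
  · simpa [sympF_comm, zetaVec_evec_zeta] using ((sympE_eq_zero_iff _ z).1 (hz _ hv)).2
  · exact sympF_comm (resVec z) _ ▸ hz _ (resCode_subset_torCode hC ⟨w, hw, rfl⟩)
  · exact sympF_comm (resVec z) _ ▸ hz _ (zetaVec_mem_torCode hC hw)

def splitEquiv (n : ℕ) : VE n ≃ VF n × VF n where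
  toFun x := (resVec x, zetaVec x)
  invFun p := (fun i => ((p.1.1 i, p.2.1 i) : Ering), fun i => ((p.1.2 i, p.2.2 i) : Ering))
  left_inv _ := rfl
  right_inv _ := rfl

lemma card_leftDual : Nat.card (leftDual C) = Nat.card (dualF (resCode C)) ^ 2 := by
  rw [sq, ← Nat.card_prod, ← Nat.card_congr (Equiv.Set.prod _ _)]
  exact Nat.card_congr ((splitEquiv n).subtypeEquiv fun _ => mem_leftDual_iff)

def IsLinearCode.resSubmodule (hC : IsLinearCode C) : Submodule (ZMod 2) (VF n) :=
  AddSubgroup.toZModSubmodule 2 (hC.toAddSubgroup.map resHom)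

lemma IsLinearCode.coe_resSubmodule (hC : IsLinearCode C) :
    (hC.resSubmodule : Set (VF n)) = resCode C :=
  AddSubgroup.coe_map _ _

lemma card_mul_card_leftDual_mul_card_resCode (hC : IsLinearCode C) :
    Nat.card C * Nat.card (leftDual C) * Nat.card (resCode C) =
      4 ^ (2 * n) * Nat.card (torCode C) := by
  have hres := card_dualF_mul_card hC.resSubmodule
  rw [← SetLike.coe_sort_coe, hC.coe_resSubmodule] at hres
  rw [card_eq_card_resCode_mul_card_torCode hC, card_leftDual, pow_mul', ← hres]
  ring

lemma isFree_iff_card_torCode_le (hC : IsLinearCode C) :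
    IsFree C ↔ Nat.card (torCode C) ≤ Nat.card (resCode C) := by
  refine ⟨fun h => (congrArg (fun D : Set (VF n) => Nat.card D) h).ge, fun h => ?_⟩
  rw [Nat.card_coe_set_eq, Nat.card_coe_set_eq] at h
  exact Set.eq_of_subset_of_ncard_le (resCode_subset_torCode hC) h

lemma leftDual_eq_dual_of_isFree (hC : IsLinearCode C) (hfree : IsFree C) :
    leftDual C = dual C := by
  refine (Set.inter_eq_left.2 fun z hz => ?_).symm
  rw [mem_rightDual_iff hC, ← hfree]
  exact (mem_leftDual_iff.1 hz).1

end Ering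

open Ering
/-- `|C|·|C^{⊥_{S_L}}| = 4^{2n}·2^{k₂}`; hence `C` is left symplectic
nice iff `C` is free, in which case `C^{⊥_{S_L}} = C^{⊥_S}`. -/
theorem Ering.left_nice_iff_free {n k₁ k₂ : ℕ} (C : Set (VE n)) (hC : IsLinearCode C)
    (hres : Nat.card ↥(resCode C) = 2 ^ k₁)
    (htor : Nat.card ↥(torCode C) = 2 ^ (k₁ + k₂)) :
    Nat.card ↥C * Nat.card ↥(leftDual C) = 4 ^ (2 * n) * 2 ^ k₂ ∧
    (Nat.card ↥C * Nat.card ↥(leftDual C) = 4 ^ (2 * n) ↔ IsFree C) ∧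
    (IsFree C → leftDual C = dual C) := by
  have hcard := card_mul_card_leftDual_mul_card_resCode hC
  rw [hres, htor, pow_add] at hcard
  have hmain : Nat.card C * Nat.card (leftDual C) = 4 ^ (2 * n) * 2 ^ k₂ :=
    Nat.eq_of_mul_eq_mul_right (by positivity) (hcard.trans (by ring))
  refine ⟨hmain, ?_, leftDual_eq_dual_of_isFree hC⟩
  rw [hmain, isFree_iff_card_torCode_le hC, hres, htor]
  simp [Nat.pow_le_pow_iff_right]
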